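/- For integers n, m ≥ 3, the F-index of the vertex Q-join of the cycle C_n and the cycle C_m is F(C_n ∨̇_Q C_m) = mn(m² + n²) + 6mn(m + n) + 24mn + 8m + 72n. -/

import Mathlib

/-- The subdivision graph `S(G)`: a new vertex is inserted into each edge of `G`
(each edge is replaced by a path of length 2). The inserted vertices form the
right summand `↥G.edgeSet`. -/
def Sgraph {V : Type*} (G : SimpleGraph V) : SimpleGraph (V ⊕ ↥G.edgeSet) where
  Adj x y :=
    match x, y with
    | Sum.inl v, Sum.inr e => v ∈ (e : Sym2 V)
    | Sum.inr e, Sum.inl v => v ∈ (e : Sym2 V)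
    | _, _ => False
  symm := by constructor; rintro (v | e) (w | f) h <;> exact h
  loopless := by constructor; rintro (v | e) h <;> exact h

/-- The graph `R(G)`: obtained from `G` by inserting a new vertex into each edge of `G`
and joining each new vertex to the end vertices of its corresponding edge. -/
def Rgraph {V : Type*} (G : SimpleGraph V) : SimpleGraph (V ⊕ ↥G.edgeSet) where
  Adj x y :=
    match x, y with
    | Sum.inl v, Sum.inl w => G.Adj v w
    | Sum.inl v, Sum.inr e => v ∈ (e : Sym2 V)
    | Sum.inr e, Sum.inl v => v ∈ (e : Sym2 V)
    | Sum.inr _, Sum.inr _ => False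
  symm := by
    constructor
    rintro (v | e) (w | f) h
    · exact G.adj_symm h
    · exact h
    · exact h
    · exact h
  loopless := by
    constructor
    rintro (v | e) h
    · exact G.irrefl h
    · exact h

/-- The graph `Q(G)`: obtained from `G` by inserting a new vertex into each edge of `G`,
then joining by edges those pairs of new vertices lying on adjacent edges of `G`. -/
def Qgraph {V : Type*} (G : SimpleGraph V) : SimpleGraph (V ⊕ ↥G.edgeSet) where
  Adj x y :=
    match x, y with
    | Sum.inl _, Sum.inl _ => False
    | Sum.inl v, Sum.inr e => v ∈ (e : Sym2 V)
    | Sum.inr e, Sum.inl v => v ∈ (e : Sym2 V)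
    | Sum.inr e, Sum.inr f => e ≠ f ∧ ∃ v, v ∈ (e : Sym2 V) ∧ v ∈ (f : Sym2 V)
  symm := by
    constructor
    rintro (v | e) (w | f) h
    · exact h
    · exact h
    · exact h
    · exact ⟨h.1.symm, by obtain ⟨v, h1, h2⟩ := h.2; exact ⟨v, h2, h1⟩⟩
  loopless := by
    constructor
    rintro (v | e) h
    · exact h
    · exact h.1 rfl

/-- The total graph `T(G)`: obtained from `G` by inserting a new vertex into each edge,
joining each new vertex to the end vertices of its corresponding edge, and joining by
edges those pairs of new vertices lying on adjacent edges of `G`. -/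
def Tgraph {V : Type*} (G : SimpleGraph V) : SimpleGraph (V ⊕ ↥G.edgeSet) where
  Adj x y :=
    match x, y with
    | Sum.inl v, Sum.inl w => G.Adj v w
    | Sum.inl v, Sum.inr e => v ∈ (e : Sym2 V)
    | Sum.inr e, Sum.inl v => v ∈ (e : Sym2 V)
    | Sum.inr e, Sum.inr f => e ≠ f ∧ ∃ v, v ∈ (e : Sym2 V) ∧ v ∈ (f : Sym2 V)
  symm := by
    constructor
    rintro (v | e) (w | f) h
    · exact G.adj_symm h
    · exact h
    · exact h
    · exact ⟨h.1.symm, by obtain ⟨v, h1, h2⟩ := h.2; exact ⟨v, h2, h1⟩⟩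
  loopless := by
    constructor
    rintro (v | e) h
    · exact G.irrefl h
    · exact h.1 rfl

/-- The disjoint union of `H` and `K` together with all edges joining a vertex `a` of `H`
with `P a` to every vertex of `K`. -/
def joinOn {A B : Type*} (H : SimpleGraph A) (K : SimpleGraph B) (P : A → Prop) :
    SimpleGraph (A ⊕ B) where
  Adj x y :=
    match x, y with
    | Sum.inl a, Sum.inl a' => H.Adj a a'
    | Sum.inr b, Sum.inr b' => K.Adj b b'
    | Sum.inl a, Sum.inr _ => P a
    | Sum.inr _, Sum.inl a => P a
  symm := by
    constructor
    rintro (a | b) (a' | b') h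
    · exact H.adj_symm h
    · exact h
    · exact h
    · exact K.adj_symm h
  loopless := by
    constructor
    rintro (a | b) h
    · exact H.irrefl h
    · exact K.irrefl h

/-- The vertex S-join `G₁ ∨̇_S G₂`: obtained from `S(G₁)` and `G₂` by joining each vertex
of `V(G₁)` to every vertex of `G₂`. -/
def vertexSJoin {V₁ V₂ : Type*} (G₁ : SimpleGraph V₁) (G₂ : SimpleGraph V₂) :
    SimpleGraph ((V₁ ⊕ ↥G₁.edgeSet) ⊕ V₂) :=
  joinOn (Sgraph G₁) G₂ (fun x => x.isLeft)

/-- The edge S-join `G₁ ∨̱_S G₂`: obtained from `S(G₁)` and `G₂` by joining each inserted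
vertex (each vertex of `I(G₁)`) to every vertex of `G₂`. -/
def edgeSJoin {V₁ V₂ : Type*} (G₁ : SimpleGraph V₁) (G₂ : SimpleGraph V₂) :
    SimpleGraph ((V₁ ⊕ ↥G₁.edgeSet) ⊕ V₂) :=
  joinOn (Sgraph G₁) G₂ (fun x => x.isRight)

/-- The vertex R-join `G₁ ∨̇_R G₂`. -/
def vertexRJoin {V₁ V₂ : Type*} (G₁ : SimpleGraph V₁) (G₂ : SimpleGraph V₂) :
    SimpleGraph ((V₁ ⊕ ↥G₁.edgeSet) ⊕ V₂) :=
  joinOn (Rgraph G₁) G₂ (fun x => x.isLeft)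

/-- The edge R-join `G₁ ∨̱_R G₂`. -/
def edgeRJoin {V₁ V₂ : Type*} (G₁ : SimpleGraph V₁) (G₂ : SimpleGraph V₂) :
    SimpleGraph ((V₁ ⊕ ↥G₁.edgeSet) ⊕ V₂) :=
  joinOn (Rgraph G₁) G₂ (fun x => x.isRight)

/-- The vertex Q-join `G₁ ∨̇_Q G₂`. -/
def vertexQJoin {V₁ V₂ : Type*} (G₁ : SimpleGraph V₁) (G₂ : SimpleGraph V₂) :
    SimpleGraph ((V₁ ⊕ ↥G₁.edgeSet) ⊕ V₂) :=
  joinOn (Qgraph G₁) G₂ (fun x => x.isLeft)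

/-- The edge Q-join `G₁ ∨̱_Q G₂`. -/
def edgeQJoin {V₁ V₂ : Type*} (G₁ : SimpleGraph V₁) (G₂ : SimpleGraph V₂) :
    SimpleGraph ((V₁ ⊕ ↥G₁.edgeSet) ⊕ V₂) :=
  joinOn (Qgraph G₁) G₂ (fun x => x.isRight)

/-- The vertex T-join `G₁ ∨̇_T G₂`. -/
def vertexTJoin {V₁ V₂ : Type*} (G₁ : SimpleGraph V₁) (G₂ : SimpleGraph V₂) :
    SimpleGraph ((V₁ ⊕ ↥G₁.edgeSet) ⊕ V₂) :=
  joinOn (Tgraph G₁) G₂ (fun x => x.isLeft)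

/-- The edge T-join `G₁ ∨̱_T G₂`. -/
def edgeTJoin {V₁ V₂ : Type*} (G₁ : SimpleGraph V₁) (G₂ : SimpleGraph V₂) :
    SimpleGraph ((V₁ ⊕ ↥G₁.edgeSet) ⊕ V₂) :=
  joinOn (Tgraph G₁) G₂ (fun x => x.isRight)

/-- Degree of a vertex in a graph on a finite vertex type. -/
noncomputable def gdeg {V : Type*} [Finite V] (G : SimpleGraph V) (v : V) : ℕ :=
  haveI : Fintype ↥(G.neighborSet v) := Fintype.ofFinite _
  G.degree v

/-- The forgotten topological index (F-index): `F(G) = ∑_{v ∈ V(G)} d_G(v)³`. -/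
noncomputable def Findex {V : Type*} [Finite V] (G : SimpleGraph V) : ℕ :=
  haveI := Fintype.ofFinite V
  ∑ v : V, gdeg G v ^ 3

/-- The first Zagreb index: `M₁(G) = ∑_{v ∈ V(G)} d_G(v)²`. -/
noncomputable def M1 {V : Type*} [Finite V] (G : SimpleGraph V) : ℕ :=
  haveI := Fintype.ofFinite V
  ∑ v : V, gdeg G v ^ 2

/-- `M₄(G) = ∑_{v ∈ V(G)} d_G(v)⁴`. -/
noncomputable def M4 {V : Type*} [Finite V] (G : SimpleGraph V) : ℕ :=
  haveI := Fintype.ofFinite V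
  ∑ v : V, gdeg G v ^ 4

/-- The hyper Zagreb index: `HM(G) = ∑_{uv ∈ E(G)} (d_G(u) + d_G(v))²`. -/
noncomputable def HM {V : Type*} [Finite V] (G : SimpleGraph V) : ℕ :=
  haveI : Fintype ↥G.edgeSet := Fintype.ofFinite _
  ∑ e : ↥G.edgeSet,
    Sym2.lift ⟨fun u v => (gdeg G u + gdeg G v) ^ 2,
      fun u v => by dsimp only; rw [add_comm]⟩ (e : Sym2 V)

/-- The redefined Zagreb index:
`ReZM(G) = ∑_{uv ∈ E(G)} d_G(u) d_G(v) (d_G(u) + d_G(v))`. -/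
noncomputable def ReZM {V : Type*} [Finite V] (G : SimpleGraph V) : ℕ :=
  haveI : Fintype ↥G.edgeSet := Fintype.ofFinite _
  ∑ e : ↥G.edgeSet,
    Sym2.lift ⟨fun u v => gdeg G u * gdeg G v * (gdeg G u + gdeg G v),
      fun u v => by dsimp only; ring⟩ (e : Sym2 V)

/-- The number of edges of `G`. -/
noncomputable def numEdges {V : Type*} (G : SimpleGraph V) : ℕ :=
  Nat.card ↥G.edgeSet

/-! In `C_n ∨̇_Q C_m` an original vertex of `C_n` is adjacent to its two subdivision vertices and
to all of `C_m` (degree `m + 2`); the subdivision vertex of an edge `uw` is adjacent to `u`, `w`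
and to the `d(u) + d(w) - 2 = 2` edges of `C_n` meeting `uw` (degree `4`); a vertex of `C_m` is
adjacent to its two cycle neighbours and to all `n` original vertices (degree `n + 2`). Since
`C_n` has `n` edges, `F = n (m + 2)³ + 64 n + m (n + 2)³`. -/

open SimpleGraph

lemma gdeg_eq_natCard {V : Type*} [Finite V] (G : SimpleGraph V) (v : V) :
    gdeg G v = Nat.card (G.neighborSet v) := by
  let : Fintype (G.neighborSet v) := Fintype.ofFinite _
  rw [gdeg, ← card_neighborSet_eq_degree, Nat.card_eq_fintype_card]

lemma gdeg_eq_degree {V : Type*} [Finite V] (G : SimpleGraph V) (v : V)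
    [Fintype (G.neighborSet v)] : gdeg G v = G.degree v := by
  rw [gdeg_eq_natCard, ← card_neighborSet_eq_degree, Nat.card_eq_fintype_card]

lemma Findex_eq_sum {V : Type*} [Fintype V] (G : SimpleGraph V) :
    Findex G = ∑ v : V, gdeg G v ^ 3 := by
  rw [Findex, Subsingleton.elim (Fintype.ofFinite V) ‹_›]

lemma natCard_incidenceSet {V : Type*} [Finite V] (G : SimpleGraph V) (v : V) :
    Nat.card (G.incidenceSet v) = gdeg G v := by
  classical
  exact (Nat.card_congr (G.incidenceSetEquivNeighborSet v)).trans (gdeg_eq_natCard G v).symm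

lemma two_mul_natCard_edgeSet_of_gdeg_eq {V : Type*} [Finite V] (G : SimpleGraph V) {r : ℕ}
    (hr : ∀ v, gdeg G v = r) : 2 * Nat.card G.edgeSet = Nat.card V * r := by
  classical
  have := Fintype.ofFinite V
  rw [← G.edgeFinset_card.trans Nat.card_eq_fintype_card.symm,
    ← sum_degrees_eq_twice_card_edges]
  simp [← gdeg_eq_degree, hr]

lemma Nat.card_subtype_sum {α β : Type*} [Finite α] [Finite β] (p : α ⊕ β → Prop) :
    Nat.card {c // p c} = Nat.card {a // p (.inl a)} + Nat.card {b // p (.inr b)} := by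
  rw [Nat.card_congr Equiv.subtypeSum, Nat.card_sum]

section joinOn

variable {A B : Type*} [Finite A] [Finite B] (H : SimpleGraph A) (K : SimpleGraph B)
  {P : A → Prop}

lemma gdeg_joinOn_inl_of_pos {a : A} (ha : P a) :
    gdeg (joinOn H K P) (.inl a) = gdeg H a + Nat.card B := by
  rw [gdeg_eq_natCard, gdeg_eq_natCard, Nat.card_subtype_sum]
  show Nat.card (H.neighborSet a) + Nat.card {b : B // P a} = _
  rw [Nat.card_congr (Equiv.subtypeUnivEquiv fun _ => ha)]

lemma gdeg_joinOn_inl_of_neg {a : A} (ha : ¬ P a) :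
    gdeg (joinOn H K P) (.inl a) = gdeg H a := by
  rw [gdeg_eq_natCard, gdeg_eq_natCard, Nat.card_subtype_sum]
  show Nat.card (H.neighborSet a) + Nat.card {b : B // P a} = _
  have : IsEmpty {b : B // P a} := ⟨fun b => ha b.2⟩
  rw [Nat.card_of_isEmpty (α := {b : B // P a}), add_zero]

lemma gdeg_joinOn_inr (P : A → Prop) (b : B) :
    gdeg (joinOn H K P) (.inr b) = Nat.card {a // P a} + gdeg K b := by
  rw [gdeg_eq_natCard, gdeg_eq_natCard, Nat.card_subtype_sum]
  rfl

end joinOn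

lemma gdeg_lineGraph_add_two {V : Type*} [Finite V] {G : SimpleGraph V} {u w : V}
    (h : G.Adj u w) : gdeg G.lineGraph ⟨s(u, w), h⟩ + 2 = gdeg G u + gdeg G w := by
  have hnbr : Subtype.val '' G.lineGraph.neighborSet ⟨s(u, w), h⟩ =
      (G.incidenceSet u ∪ G.incidenceSet w) \ {s(u, w)} := by
    ext s
    simp only [Set.mem_image, mem_neighborSet, lineGraph_adj_iff_exists, Subtype.exists,
      exists_and_right, exists_eq_right, Sym2.mem_iff, incidenceSet, Set.mem_sdiff,
      Set.mem_union, Set.mem_ofPred_eq, Set.mem_singleton_iff]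
    constructor
    · rintro ⟨⟨hs, hne⟩, v, rfl | rfl, hv⟩
      exacts [⟨.inl ⟨hs, hv⟩, fun e => hne (Subtype.ext e.symm)⟩,
        ⟨.inr ⟨hs, hv⟩, fun e => hne (Subtype.ext e.symm)⟩]
    · rintro ⟨⟨hs, hv⟩ | ⟨hs, hv⟩, hne⟩
      exacts [⟨⟨hs, fun e => hne (congrArg Subtype.val e).symm⟩, u, .inl rfl, hv⟩,
        ⟨⟨hs, fun e => hne (congrArg Subtype.val e).symm⟩, w, .inr rfl, hv⟩]
  have hmem : s(u, w) ∈ G.incidenceSet u ∪ G.incidenceSet w := .inl ⟨h, Sym2.mem_mk_left u w⟩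
  have hdiff := Set.ncard_sdiff_singleton_add_one hmem
  have hunion := Set.ncard_union_add_ncard_inter (G.incidenceSet u) (G.incidenceSet w)
  rw [G.incidenceSet_inter_incidenceSet_of_adj h, Set.ncard_singleton] at hunion
  have hdeg (v : V) : (G.incidenceSet v).ncard = gdeg G v := by
    rw [← Nat.card_coe_set_eq, natCard_incidenceSet]
  have hline : gdeg G.lineGraph ⟨s(u, w), h⟩ =
      ((G.incidenceSet u ∪ G.incidenceSet w) \ {s(u, w)}).ncard := by
    rw [gdeg_eq_natCard, Nat.card_coe_set_eq, ← hnbr,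
      Set.ncard_image_of_injective _ Subtype.val_injective]
  rw [hdeg, hdeg] at hunion
  omega

section Qgraph

variable {V : Type*} [Finite V] (G : SimpleGraph V)

lemma gdeg_Qgraph_inl (v : V) : gdeg (Qgraph G) (.inl v) = gdeg G v := by
  rw [gdeg_eq_natCard, Nat.card_subtype_sum]
  show Nat.card {w : V // False} + Nat.card {e : G.edgeSet // v ∈ (e : Sym2 V)} = _
  rw [Nat.card_of_isEmpty (α := {w : V // False}), zero_add, ← natCard_incidenceSet]
  exact Nat.card_congr (Equiv.subtypeSubtypeEquivSubtypeInter (· ∈ G.edgeSet) (v ∈ ·))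

lemma gdeg_Qgraph_inr {u w : V} (h : G.Adj u w) :
    gdeg (Qgraph G) (.inr ⟨s(u, w), h⟩) = gdeg G u + gdeg G w := by
  rw [gdeg_eq_natCard, Nat.card_subtype_sum, ← gdeg_lineGraph_add_two h, add_comm]
  show Nat.card {f : G.edgeSet // _} + Nat.card {x : V // x ∈ s(u, w)} = _
  congr 1
  · rw [gdeg_eq_natCard]
    exact Nat.card_congr (Equiv.subtypeEquivRight fun f => lineGraph_adj_iff_exists.symm)
  · rw [← Set.ncard_pair h.ne, ← Nat.card_coe_set_eq]
    exact Nat.card_congr (Equiv.subtypeEquivRight fun x => by simp [Sym2.mem_iff])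

end Qgraph

section vertexQJoin

variable {V₁ V₂ : Type*} [Finite V₁] [Finite V₂] (G₁ : SimpleGraph V₁) (G₂ : SimpleGraph V₂)

lemma gdeg_vertexQJoin_inl_inl (v : V₁) :
    gdeg (vertexQJoin G₁ G₂) (.inl (.inl v)) = gdeg G₁ v + Nat.card V₂ := by
  rw [vertexQJoin, gdeg_joinOn_inl_of_pos (Qgraph G₁) G₂ (P := fun x => x.isLeft) rfl,
    gdeg_Qgraph_inl]

lemma gdeg_vertexQJoin_inl_inr {u w : V₁} (h : G₁.Adj u w) :
    gdeg (vertexQJoin G₁ G₂) (.inl (.inr ⟨s(u, w), h⟩)) = gdeg G₁ u + gdeg G₁ w := by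
  rw [vertexQJoin, gdeg_joinOn_inl_of_neg (Qgraph G₁) G₂ (P := fun x => x.isLeft)
    (a := .inr _) Bool.false_ne_true, gdeg_Qgraph_inr G₁ h]

lemma gdeg_vertexQJoin_inr (w : V₂) :
    gdeg (vertexQJoin G₁ G₂) (.inr w) = Nat.card V₁ + gdeg G₂ w := by
  rw [vertexQJoin, gdeg_joinOn_inr, Nat.card_subtype_sum]
  simp

theorem Findex_vertexQJoin_of_gdeg_eq {r₁ r₂ : ℕ} (h₁ : ∀ v, gdeg G₁ v = r₁)
    (h₂ : ∀ w, gdeg G₂ w = r₂) :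
    Findex (vertexQJoin G₁ G₂) = Nat.card V₁ * (r₁ + Nat.card V₂) ^ 3 +
      Nat.card G₁.edgeSet * (2 * r₁) ^ 3 + Nat.card V₂ * (Nat.card V₁ + r₂) ^ 3 := by
  have := Fintype.ofFinite V₁
  have := Fintype.ofFinite V₂
  have := Fintype.ofFinite G₁.edgeSet
  have hedge (e : G₁.edgeSet) : gdeg (vertexQJoin G₁ G₂) (.inl (.inr e)) = 2 * r₁ := by
    obtain ⟨e, he⟩ := e
    induction e using Sym2.ind with
    | _ u w => rw [gdeg_vertexQJoin_inl_inr G₁ G₂ he, h₁, h₁, two_mul]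
  rw [Findex_eq_sum, Fintype.sum_sum_type, Fintype.sum_sum_type]
  simp only [gdeg_vertexQJoin_inl_inl, gdeg_vertexQJoin_inr, hedge, h₁, h₂, Finset.sum_const,
    Finset.card_univ, smul_eq_mul, Nat.card_eq_fintype_card]

end vertexQJoin

lemma gdeg_cycleGraph {n : ℕ} (hn : 3 ≤ n) (v : Fin n) : gdeg (cycleGraph n) v = 2 := by
  obtain ⟨k, rfl⟩ := Nat.exists_eq_add_of_le' hn
  rw [gdeg_eq_degree]
  exact cycleGraph_degree_three_le

lemma natCard_edgeSet_cycleGraph {n : ℕ} (hn : 3 ≤ n) : Nat.card (cycleGraph n).edgeSet = n := by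
  have := two_mul_natCard_edgeSet_of_gdeg_eq _ (gdeg_cycleGraph hn)
  rw [Nat.card_fin] at this
  omega

theorem Findex_vertexQJoin_ex16 (n m : ℕ) (hn : 3 ≤ n) (hm : 3 ≤ m) :
    (Findex (vertexQJoin (SimpleGraph.cycleGraph n) (SimpleGraph.cycleGraph m)) : ℤ) =
      (m : ℤ) * (n : ℤ) * ((m : ℤ) ^ 2 + (n : ℤ) ^ 2) + 6 * (m : ℤ) * (n : ℤ) * ((m : ℤ) + (n : ℤ)) + 24 * (m : ℤ) * (n : ℤ) + 8 * (m : ℤ) + 72 * (n : ℤ) := by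
  rw [Findex_vertexQJoin_of_gdeg_eq _ _ (gdeg_cycleGraph hn) (gdeg_cycleGraph hm),
    natCard_edgeSet_cycleGraph hn, Nat.card_fin, Nat.card_fin]
  push_cast
  ring
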